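/- Main proposition: Let H be a real Hilbert space, U a weakly mixing surjective linear isometry of H, and ξ a star-cyclic unit vector for U. Then there is a surjective linear isometry V of H, conjugate to U by an isometric isomorphism, such that (a) ξ is star-cyclic for V and ⟨U^i ξ, ξ⟩ = ⟨V^i ξ, ξ⟩ for all i ∈ ℤ, and (b) limsup_n (1/n)∑_{i=0}^{n-1} ⟨U^i ξ, V^i ξ⟩ = 1 and liminf_n (1/n)∑_{i=0}^{n-1} ⟨U^i ξ, V^i ξ⟩ = -1. -/

import Mathlib

open scoped RealInnerProductSpace
open Filter Topology Submodule

/-! Write `Kₐ = span {Uⁱξ : i ≤ a}`. Weak mixing lets us choose `m₀ < m₁ < ⋯` such that the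
Cesàro mean of `‖P_{K_{m j}} Uⁱξ‖` over `i < m (j + 1)` is below `1 / (j + 1)`. Let `S` be the
closed span of the blocks `K_{m (2k+1)} ⊓ (K_{m (2k)})ᗮ` and `W` the reflection which is `-1` on `S`
and `1` on `Sᗮ ∋ ξ`. For `i ≤ m (2k+1)`, `Uⁱξ` lies in `S` up to its projection onto `K_{m (2k)}`,
so on average `⟪Uⁱξ, W Uⁱξ⟫ ≈ -1`. For `i ≤ m (2k+2)`, the blocks beyond `k` are orthogonal to
`Uⁱξ` and the earlier ones lie in `K_{m (2k+1)}`, so on average `⟪Uⁱξ, W Uⁱξ⟫ ≈ 1`. Finally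
`V = W U W⁻¹` has `Vⁱξ = W Uⁱξ`. -/

theorem Filter.exists_strictMono_rel_succ_of_eventually {P : ℕ → ℕ → Prop}
    (h : ∀ a, ∀ᶠ b in atTop, P a b) : ∃ m : ℕ → ℕ, StrictMono m ∧ ∀ j, P (m j) (m (j + 1)) := by
  choose f hf using fun a => ((h a).and (eventually_gt_atTop a)).exists
  refine ⟨fun j => f^[j] 0, strictMono_nat_of_lt_succ fun j => ?_, fun j => ?_⟩
  · simpa only [Function.iterate_succ_apply'] using (hf _).2
  · simpa only [Function.iterate_succ_apply'] using (hf _).1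

section LimsupSubseq

variable {β : Type*} [ConditionallyCompleteLinearOrder β] [TopologicalSpace β] [OrderTopology β]
  {u : ℕ → β} {φ : ℕ → ℕ} {c : β}

theorem Filter.limsup_eq_of_le_of_tendsto_comp (hu : ∀ n, u n ≤ c)
    (hφ : Tendsto φ atTop atTop) (hc : Tendsto (u ∘ φ) atTop (𝓝 c)) :
    limsup u atTop = c := by
  have hcobdd : (map φ atTop).IsCoboundedUnder (· ≤ ·) u := hc.isCoboundedUnder_le
  refine le_antisymm (limsup_le_of_le (hcobdd.mono (map_mono hφ)) (Eventually.of_forall hu)) ?_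
  calc c = limsup (u ∘ φ) atTop := hc.limsup_eq.symm
    _ ≤ limsup u atTop := hφ.limsup_comp_le_limsup hcobdd (isBoundedUnder_of ⟨c, hu⟩)

theorem Filter.liminf_eq_of_le_of_tendsto_comp (hu : ∀ n, c ≤ u n)
    (hφ : Tendsto φ atTop atTop) (hc : Tendsto (u ∘ φ) atTop (𝓝 c)) :
    liminf u atTop = c :=
  limsup_eq_of_le_of_tendsto_comp (β := βᵒᵈ) hu hφ hc

end LimsupSubseq

noncomputable def cesaroMean (f : ℕ → ℝ) (n : ℕ) : ℝ :=
  (1 / (n : ℝ)) * ∑ i ∈ Finset.range n, f i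

theorem cesaroMean_le_cesaroMean {f g : ℕ → ℝ} {n : ℕ} (h : ∀ i < n, f i ≤ g i) :
    cesaroMean f n ≤ cesaroMean g n :=
  mul_le_mul_of_nonneg_left (Finset.sum_le_sum fun i hi => h i (Finset.mem_range.1 hi))
    (by positivity)

theorem cesaroMean_mul_add {n : ℕ} (hn : n ≠ 0) (f : ℕ → ℝ) (a b : ℝ) :
    cesaroMean (fun i => a * f i + b) n = a * cesaroMean f n + b := by
  simp only [cesaroMean, Finset.sum_add_distrib, ← Finset.mul_sum, Finset.sum_const,
    Finset.card_range, nsmul_eq_mul]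
  field_simp

theorem abs_cesaroMean_le {f : ℕ → ℝ} {c : ℝ} (hf : ∀ i, |f i| ≤ c) (n : ℕ) :
    |cesaroMean f n| ≤ c := by
  rcases Nat.eq_zero_or_pos n with rfl | hn
  · simpa [cesaroMean] using (abs_nonneg _).trans (hf 0)
  calc |cesaroMean f n| ≤ (1 / (n : ℝ)) * ∑ i ∈ Finset.range n, |f i| := by
        rw [cesaroMean, abs_mul, abs_of_nonneg (by positivity)]
        gcongr
        exact Finset.abs_sum_le_sum_abs _ _
    _ ≤ (1 / (n : ℝ)) * (n * c) := by
        gcongr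
        simpa using Finset.sum_le_card_nsmul (Finset.range n) _ c fun i _ => hf i
    _ = c := by field_simp

namespace Submodule

variable {𝕜 E : Type*} [RCLike 𝕜] [NormedAddCommGroup E] [InnerProductSpace 𝕜 E]

theorem mem_orthogonal_topologicalClosure_iSup {ι : Type*} (T : ι → Submodule 𝕜 E) (x : E) :
    x ∈ (⨆ i, T i).topologicalClosureᗮ ↔ ∀ i, x ∈ (T i)ᗮ := by
  rw [orthogonal_closure, ← iInf_orthogonal, mem_iInf]

theorem norm_starProjection_le_of_le {C K : Submodule 𝕜 E} [C.HasOrthogonalProjection]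
    [K.HasOrthogonalProjection] (h : C ≤ K) (x : E) :
    ‖C.starProjection x‖ ≤ ‖K.starProjection x‖ := by
  calc ‖C.starProjection x‖ = ‖C.starProjection (K.starProjection x)‖ := by
        rw [← ContinuousLinearMap.comp_apply, starProjection_comp_starProjection_of_le h]
    _ ≤ ‖K.starProjection x‖ := norm_starProjection_apply_le _ _

theorem norm_starProjection_orthogonal_le_of_sub_mem {S : Submodule 𝕜 E}
    [S.HasOrthogonalProjection] {x y : E} (h : x - y ∈ S) :
    ‖Sᗮ.starProjection x‖ ≤ ‖y‖ := by
  have hxy : Sᗮ.starProjection x = Sᗮ.starProjection y := by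
    rw [← sub_eq_zero, ← map_sub]
    exact starProjection_orthogonal_apply_eq_zero h
  rw [hxy]
  exact norm_starProjection_apply_le _ _

end Submodule

theorem Submodule.real_inner_reflection_self {E : Type*} [NormedAddCommGroup E]
    [InnerProductSpace ℝ E] (K : Submodule ℝ E) [K.HasOrthogonalProjection] (x : E) :
    ⟪x, K.reflection x⟫ = 2 * ‖K.starProjection x‖ ^ 2 - ‖x‖ ^ 2 := by
  have hproj : ⟪x, K.starProjection x⟫ = ‖K.starProjection x‖ ^ 2 := by
    rw [real_inner_comm]
    exact K.re_inner_starProjection_eq_normSq x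
  rw [reflection_apply, two_smul, inner_sub_right, inner_add_right, hproj,
    real_inner_self_eq_norm_sq]
  ring

theorem LinearIsometryEquiv.topologicalClosure_span_image_eq_top {𝕜 E F : Type*} [RCLike 𝕜]
    [NormedAddCommGroup E] [NormedSpace 𝕜 E] [NormedAddCommGroup F] [NormedSpace 𝕜 F]
    (W : E ≃ₗᵢ[𝕜] F) {s : Set E} (h : (span 𝕜 s).topologicalClosure = ⊤) :
    (span 𝕜 (W '' s)).topologicalClosure = ⊤ := by
  rw [← dense_iff_topologicalClosure_eq_top] at h ⊢
  have himage : (span 𝕜 (W '' s) : Set F) = W '' span 𝕜 s := by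
    rw [← W.coe_toLinearEquiv, ← LinearEquiv.coe_toLinearMap, ← map_coe, map_span]
  rw [himage]
  exact W.surjective.denseRange.dense_image W.continuous h

section Blocks

variable {E : Type*} [NormedAddCommGroup E] [InnerProductSpace ℝ E] (v : ℕ → E)

noncomputable def initialSpan (a : ℕ) : Submodule ℝ E :=
  span ℝ (v '' Set.Iic a)

instance (a : ℕ) : FiniteDimensional ℝ (initialSpan v a) :=
  FiniteDimensional.span_of_finite ℝ ((Set.finite_Iic a).image v)

theorem initialSpan_mono : Monotone (initialSpan v) :=
  fun _ _ h => span_mono (Set.image_mono (Set.Iic_subset_Iic.2 h))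

theorem mem_initialSpan {a i : ℕ} (h : i ≤ a) : v i ∈ initialSpan v a :=
  subset_span ⟨i, h, rfl⟩

variable (m : ℕ → ℕ)

noncomputable def oddBlock (k : ℕ) : Submodule ℝ E :=
  initialSpan v (m (2 * k + 1)) ⊓ (initialSpan v (m (2 * k)))ᗮ

noncomputable def oddBlocksClosure : Submodule ℝ E :=
  (⨆ k, oddBlock v m k).topologicalClosure

instance [CompleteSpace E] : (oddBlocksClosure v m).HasOrthogonalProjection := by
  rw [oddBlocksClosure]
  infer_instance

theorem mem_orthogonal_oddBlocksClosure_zero : v 0 ∈ (oddBlocksClosure v m)ᗮ :=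
  (mem_orthogonal_topologicalClosure_iSup _ _).2 fun _ =>
    orthogonal_le inf_le_right (le_orthogonal_orthogonal _ (mem_initialSpan v (Nat.zero_le _)))

variable {v m}

theorem norm_starProjection_orthogonal_oddBlocksClosure_le [CompleteSpace E] (hm : Monotone m)
    {k i : ℕ} (hi : i ≤ m (2 * k + 1)) :
    ‖(oddBlocksClosure v m)ᗮ.starProjection (v i)‖ ≤
      ‖(initialSpan v (m (2 * k))).starProjection (v i)‖ := by
  refine norm_starProjection_orthogonal_le_of_sub_mem (le_topologicalClosure _ ?_)
  refine le_iSup (oddBlock v m) k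
    ⟨sub_mem (mem_initialSpan v hi) ?_, sub_starProjection_mem_orthogonal _⟩
  exact initialSpan_mono v (hm (Nat.le_succ _)) (starProjection_apply_mem _ _)

theorem norm_starProjection_oddBlocksClosure_le [CompleteSpace E] (hm : Monotone m)
    {k i : ℕ} (hi : i ≤ m (2 * k + 2)) :
    ‖(oddBlocksClosure v m).starProjection (v i)‖ ≤
      ‖(initialSpan v (m (2 * k + 1))).starProjection (v i)‖ := by
  set C : Submodule ℝ E := ⨆ (l) (_ : l ≤ k), oddBlock v m l
  have hCK : C ≤ initialSpan v (m (2 * k + 1)) :=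
    iSup₂_le fun l hl => inf_le_left.trans (initialSpan_mono v (hm (by omega)))
  have : FiniteDimensional ℝ C := finiteDimensional_of_le hCK
  have hCS : C ≤ oddBlocksClosure v m :=
    (iSup₂_le fun l _ => le_iSup (oddBlock v m) l).trans (le_topologicalClosure _)
  have hproj : (oddBlocksClosure v m).starProjection (v i) = C.starProjection (v i) := by
    refine eq_starProjection_of_mem_orthogonal (hCS (starProjection_apply_mem _ _))
      ((mem_orthogonal_topologicalClosure_iSup _ _).2 fun l => ?_)
    rcases le_or_gt l k with hl | hl
    · exact orthogonal_le (le_iSup₂ (f := fun l (_ : l ≤ k) => oddBlock v m l) l hl)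
        (sub_starProjection_mem_orthogonal _)
    -- `v i` and `C` both lie in `initialSpan v (m (2 * l))`, which is orthogonal to block `l`
    refine orthogonal_le inf_le_right (le_orthogonal_orthogonal _ (sub_mem ?_ ?_))
    · exact mem_initialSpan v (hi.trans (hm (by omega)))
    · exact initialSpan_mono v (hm (by omega)) (hCK (starProjection_apply_mem _ _))
  rw [hproj]
  exact norm_starProjection_le_of_le hCK _

end Blocks

section Flip

variable {E : Type*} [NormedAddCommGroup E] [InnerProductSpace ℝ E] [CompleteSpace E]
  {v : ℕ → E} {m : ℕ → ℕ}

theorem real_inner_reflection_oddBlocksClosure_le (hv : ∀ i, ‖v i‖ = 1) (hm : Monotone m)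
    {k i : ℕ} (hi : i ≤ m (2 * k + 1)) :
    ⟪v i, (oddBlocksClosure v m)ᗮ.reflection (v i)⟫ ≤
      2 * ‖(initialSpan v (m (2 * k))).starProjection (v i)‖ - 1 := by
  have hblock := norm_starProjection_orthogonal_oddBlocksClosure_le (v := v) hm hi
  have hle_one : ‖(initialSpan v (m (2 * k))).starProjection (v i)‖ ≤ 1 :=
    (norm_starProjection_apply_le _ _).trans (hv i).le
  rw [real_inner_reflection_self, hv]
  nlinarith [norm_nonneg ((oddBlocksClosure v m)ᗮ.starProjection (v i))]

theorem le_real_inner_reflection_oddBlocksClosure (hv : ∀ i, ‖v i‖ = 1) (hm : Monotone m)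
    {k i : ℕ} (hi : i ≤ m (2 * k + 2)) :
    1 - 2 * ‖(initialSpan v (m (2 * k + 1))).starProjection (v i)‖ ≤
      ⟪v i, (oddBlocksClosure v m)ᗮ.reflection (v i)⟫ := by
  have hblock := norm_starProjection_oddBlocksClosure_le (v := v) hm hi
  have hle_one : ‖(initialSpan v (m (2 * k + 1))).starProjection (v i)‖ ≤ 1 :=
    (norm_starProjection_apply_le _ _).trans (hv i).le
  have hpythagoras := norm_sq_eq_add_norm_sq_starProjection (v i) (oddBlocksClosure v m)
  rw [real_inner_reflection_self, hv]
  rw [hv] at hpythagoras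
  nlinarith [norm_nonneg ((oddBlocksClosure v m).starProjection (v i))]

theorem cesaroMean_inner_reflection_oddBlocksClosure_le (hv : ∀ i, ‖v i‖ = 1)
    (hm : StrictMono m) (k : ℕ) :
    cesaroMean (fun i => ⟪v i, (oddBlocksClosure v m)ᗮ.reflection (v i)⟫) (m (2 * k + 1)) ≤
      2 * cesaroMean (fun i => ‖(initialSpan v (m (2 * k))).starProjection (v i)‖)
        (m (2 * k + 1)) - 1 := by
  calc _ ≤ cesaroMean (fun i => 2 * ‖(initialSpan v (m (2 * k))).starProjection (v i)‖ + -1)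
        (m (2 * k + 1)) := cesaroMean_le_cesaroMean fun i hi =>
          real_inner_reflection_oddBlocksClosure_le hv hm.monotone hi.le
    _ = _ := by
        rw [cesaroMean_mul_add (hm (Nat.lt_succ_self _)).ne_bot]
        ring

theorem le_cesaroMean_inner_reflection_oddBlocksClosure (hv : ∀ i, ‖v i‖ = 1)
    (hm : StrictMono m) (k : ℕ) :
    1 - 2 * cesaroMean (fun i => ‖(initialSpan v (m (2 * k + 1))).starProjection (v i)‖)
        (m (2 * k + 2)) ≤
      cesaroMean (fun i => ⟪v i, (oddBlocksClosure v m)ᗮ.reflection (v i)⟫) (m (2 * k + 2)) := by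
  calc _ = cesaroMean (fun i => -2 * ‖(initialSpan v (m (2 * k + 1))).starProjection (v i)‖ + 1)
        (m (2 * k + 2)) := by
        rw [cesaroMean_mul_add (hm (Nat.lt_succ_self _)).ne_bot]
        ring
    _ ≤ _ := cesaroMean_le_cesaroMean fun i hi => by
        linarith [le_real_inner_reflection_oddBlocksClosure hv hm.monotone hi.le]

theorem exists_linearIsometryEquiv_limsup_liminf_cesaroMean_inner (hv : ∀ i, ‖v i‖ = 1)
    (hmix : ∀ a, Tendsto (cesaroMean fun i => ‖(initialSpan v a).starProjection (v i)‖) atTop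
      (𝓝 0)) :
    ∃ W : E ≃ₗᵢ[ℝ] E, W (v 0) = v 0 ∧
      limsup (cesaroMean fun i => ⟪v i, W (v i)⟫) atTop = 1 ∧
      liminf (cesaroMean fun i => ⟪v i, W (v i)⟫) atTop = -1 := by
  obtain ⟨m, hm, hsmall⟩ := exists_strictMono_rel_succ_of_eventually fun a =>
    (hmix a).eventually (gt_mem_nhds (Nat.one_div_pos_of_nat (n := a)))
  set δ : ℕ → ℝ := fun j =>
    cesaroMean (fun i => ‖(initialSpan v (m j)).starProjection (v i)‖) (m (j + 1))
  have hδ : Tendsto δ atTop (𝓝 0) :=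
    squeeze_zero (fun j => mul_nonneg (by positivity) (Finset.sum_nonneg fun _ _ => norm_nonneg _))
      (fun j => (hsmall j).le) (tendsto_one_div_add_atTop_nhds_zero_nat.comp hm.tendsto_atTop)
  have hlin : ∀ r, Tendsto (fun k => 2 * k + r) atTop atTop := fun r =>
    tendsto_atTop_mono (fun k => show id k ≤ 2 * k + r by dsimp; omega) tendsto_id
  have ha : ∀ n, |cesaroMean (fun i => ⟪v i, (oddBlocksClosure v m)ᗮ.reflection (v i)⟫) n| ≤ 1 :=
    abs_cesaroMean_le fun i => (abs_real_inner_le_norm _ _).trans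
      (by rw [LinearIsometryEquiv.norm_map, hv, one_mul])
  refine ⟨_, reflection_mem_subspace_eq_self (mem_orthogonal_oddBlocksClosure_zero v m), ?_, ?_⟩
  · refine limsup_eq_of_le_of_tendsto_comp (fun n => (abs_le.1 (ha n)).2)
      (φ := fun k => m (2 * k + 2)) (hm.tendsto_atTop.comp (hlin 2)) ?_
    have hlower : Tendsto (fun k => 1 - 2 * δ (2 * k + 1)) atTop (𝓝 1) := by
      simpa using ((hδ.comp (hlin 1)).const_mul 2).const_sub 1
    exact tendsto_of_tendsto_of_tendsto_of_le_of_le hlower tendsto_const_nhds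
      (le_cesaroMean_inner_reflection_oddBlocksClosure hv hm) fun n => (abs_le.1 (ha _)).2
  · refine liminf_eq_of_le_of_tendsto_comp (fun n => (abs_le.1 (ha n)).1)
      (φ := fun k => m (2 * k + 1)) (hm.tendsto_atTop.comp (hlin 1)) ?_
    have hupper : Tendsto (fun k => 2 * δ (2 * k) - 1) atTop (𝓝 (-1)) := by
      simpa using ((hδ.comp (hlin 0)).const_mul 2).sub_const 1
    exact tendsto_of_tendsto_of_tendsto_of_le_of_le tendsto_const_nhds hupper
      (fun n => (abs_le.1 (ha _)).1) (cesaroMean_inner_reflection_oddBlocksClosure_le hv hm)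

end Flip

/-- Main proposition: if `U` is a weakly mixing surjective linear isometry of a real Hilbert
space `H` and `ξ` is a star-cyclic unit vector for `U`, then there is a surjective linear
isometry `V`, conjugate to `U`, such that `ξ` is star-cyclic for `V`,
`⟪U^i ξ, ξ⟫ = ⟪V^i ξ, ξ⟫` for all `i ∈ ℤ`, and the averages
`(1/n) ∑_{i<n} ⟪U^i ξ, V^i ξ⟫` have limsup `1` and liminf `-1`. -/
theorem main_proposition
    {H : Type*} [NormedAddCommGroup H] [InnerProductSpace ℝ H] [CompleteSpace H]
    (U : H ≃ₗᵢ[ℝ] H)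
    (hmix : ∀ (K : Submodule ℝ H) [FiniteDimensional ℝ K] (x : H),
      Filter.Tendsto (fun m : ℕ => (1 / (m : ℝ)) *
        ∑ i ∈ Finset.range m, ‖(K.orthogonalProjection ((U ^ i) x) : H)‖)
        Filter.atTop (nhds 0))
    (ξ : H) (hξ : ‖ξ‖ = 1)
    (hcyc : (Submodule.span ℝ {x : H | ∃ n : ℤ, (U ^ n) ξ = x}).topologicalClosure = ⊤) :
    ∃ V W : H ≃ₗᵢ[ℝ] H, V = W * U * W⁻¹ ∧
      (Submodule.span ℝ {x : H | ∃ n : ℤ, (V ^ n) ξ = x}).topologicalClosure = ⊤ ∧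
      (∀ i : ℤ, ⟪(U ^ i) ξ, ξ⟫ = ⟪(V ^ i) ξ, ξ⟫) ∧
      Filter.limsup
        (fun n : ℕ => (1 / (n : ℝ)) * ∑ i ∈ Finset.range n, ⟪(U ^ i) ξ, (V ^ i) ξ⟫)
        Filter.atTop = 1 ∧
      Filter.liminf
        (fun n : ℕ => (1 / (n : ℝ)) * ∑ i ∈ Finset.range n, ⟪(U ^ i) ξ, (V ^ i) ξ⟫)
        Filter.atTop = -1 := by
  obtain ⟨W, hWξ, hlimsup, hliminf⟩ :=
    exists_linearIsometryEquiv_limsup_liminf_cesaroMean_inner (v := fun i : ℕ => (U ^ i) ξ)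
      (fun i => by rw [LinearIsometryEquiv.norm_map, hξ]) fun a => hmix _ ξ
  replace hWξ : W ξ = ξ := by simpa using hWξ
  have hV : ∀ i : ℤ, ((W * U * W⁻¹) ^ i) ξ = W ((U ^ i) ξ) := fun i => by
    rw [conj_zpow, LinearIsometryEquiv.coe_mul, LinearIsometryEquiv.coe_mul,
      LinearIsometryEquiv.coe_inv, Function.comp_apply, Function.comp_apply,
      W.symm_apply_eq.2 hWξ.symm]
  have hVnat : ∀ i : ℕ, ((W * U * W⁻¹) ^ i) ξ = W ((U ^ i) ξ) := fun i => by
    exact_mod_cast hV i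
  refine ⟨W * U * W⁻¹, W, rfl, ?_, fun i => ?_, ?_, ?_⟩
  · have horbit : {x | ∃ n : ℤ, ((W * U * W⁻¹) ^ n) ξ = x} =
        W '' {x | ∃ n : ℤ, (U ^ n) ξ = x} := by
      simp_rw [hV]
      exact Set.range_comp W _
    rw [horbit]
    exact W.topologicalClosure_span_image_eq_top hcyc
  · rw [hV, ← W.inner_map_map, hWξ]
  · simp only [hVnat]
    exact hlimsup
  · simp only [hVnat]
    exact hliminf
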